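/- arXiv:1307.2791 — 3 statements merged into one kernel-verified Lean document; each statement's English description precedes it below -/
import Mathlib

section
/- The function γ·y + β with γ = (|ȳ| − |y̲|)/(ȳ − y̲) and β = (ȳ·|y̲| − y̲·|ȳ|)/(ȳ − y̲) is the tightest linear overestimator of |y| on [y̲, ȳ]: if a·y + b ≥ |y| for all y ∈ [y̲, ȳ], then a·y + b ≥ γ·y + β for all y ∈ [y̲, ȳ]. -/
/-!
The line `γ y + β` is the chord of `|·|` through the endpoints of `[y̲, ȳ]`. On that interval
every point is a convex combination of the endpoints, and an affine function that lies above
two values at the endpoints lies above the chord through them.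
-/

open Set

theorem chord_le_of_le_of_le {x₀ x₁ u₀ u₁ a b y : ℝ} (hx : x₀ < x₁) (hy : y ∈ Icc x₀ x₁)
    (h₀ : u₀ ≤ a * x₀ + b) (h₁ : u₁ ≤ a * x₁ + b) :
    (u₁ - u₀) / (x₁ - x₀) * y + (x₁ * u₀ - x₀ * u₁) / (x₁ - x₀) ≤ a * y + b := by
  have hd : 0 < x₁ - x₀ := sub_pos.2 hx
  rw [div_mul_eq_mul_div, ← add_div, div_le_iff₀ hd]
  calc (u₁ - u₀) * y + (x₁ * u₀ - x₀ * u₁) = (x₁ - y) * u₀ + (y - x₀) * u₁ := by ring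
    _ ≤ (x₁ - y) * (a * x₀ + b) + (y - x₀) * (a * x₁ + b) := by
        gcongr
        · exact sub_nonneg.2 hy.2
        · exact sub_nonneg.2 hy.1
    _ = (a * y + b) * (x₁ - x₀) := by ring

theorem stmt_2 (ylo yhi a b : ℝ) (hlt : ylo < yhi)
    (hover : ∀ y ∈ Set.Icc ylo yhi, |y| ≤ a * y + b) :
    ∀ y ∈ Set.Icc ylo yhi,
      ((|yhi| - |ylo|) / (yhi - ylo)) * y +
        (yhi * |ylo| - ylo * |yhi|) / (yhi - ylo) ≤ a * y + b := fun _ hy =>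
  chord_le_of_le_of_le hlt hy (hover ylo (left_mem_Icc.2 hlt.le))
    (hover yhi (right_mem_Icc.2 hlt.le))
end

section
/- Let H̲, H̄ be symmetric n×n real matrices with H̲ ≤ H̄ entrywise, d a positive vector, and define α_i = max{0, −(1/2)(H̲_{ii} − Σ_{j≠i} max(|H̲_{ij}|, |H̄_{ij}|) d_j / d_i)}. Then for every symmetric matrix H with H̲ ≤ H ≤ H̄ entrywise, the matrix H + 2·diag(α) is positive semidefinite. -/
/-!
Conjugating by `D = diag d` turns the off-diagonal entries of row `k` into `A k j * d j / d k`
without changing the spectrum, so Gershgorin's theorem applied to `D⁻¹ A D` places every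
eigenvalue of `A` in a disc centred at `A k k` of radius `∑ j ≠ k, |A k j| d j / d k`.
For `A = H + 2 diag α`, the bounds `H̲ ≤ H ≤ H̄` give `|H k j| ≤ max |H̲ k j| |H̄ k j|` and
`H̲ k k ≤ H k k`, and `α` is chosen exactly so that the radius is at most the centre; hence all
eigenvalues of the symmetric matrix `A` are nonnegative.
-/

open Matrix

namespace Matrix

variable {n : Type*} [Fintype n] [DecidableEq n]

theorem exists_mem_closedBall_scaled_of_mem_spectrum {A : Matrix n n ℝ} {d : n → ℝ}
    (hd : ∀ i, 0 < d i) {μ : ℝ} (hμ : μ ∈ spectrum ℝ A) :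
    ∃ k, μ ∈ Metric.closedBall (A k k) (∑ j ∈ Finset.univ.erase k, |A k j| * d j / d k) := by
  let D : (Matrix n n ℝ)ˣ :=
    ⟨diagonal d, diagonal d⁻¹, by simp [mul_inv_cancel₀ (hd _).ne'],
      by simp [inv_mul_cancel₀ (hd _).ne']⟩
  have hconj : ∀ k j, (((D⁻¹ : (Matrix n n ℝ)ˣ) : Matrix n n ℝ) * A * D) k j
      = A k j * d j / d k := by
    intro k j
    simp only [D, Units.inv_mk, mul_diagonal, diagonal_mul, Pi.inv_apply]
    ring
  rw [← spectrum.units_conjugate' (u := D), ← spectrum_toLin'] at hμ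
  obtain ⟨k, hk⟩ := eigenvalue_mem_ball (Module.End.HasEigenvalue.of_mem_spectrum hμ)
  refine ⟨k, ?_⟩
  simpa only [hconj, Real.norm_eq_abs, abs_div, abs_mul, abs_of_pos (hd _),
    mul_div_cancel_right₀ _ (hd k).ne'] using hk

theorem IsHermitian.posSemidef_of_scaled_diag_dominant {A : Matrix n n ℝ} (hA : A.IsHermitian)
    {d : n → ℝ} (hd : ∀ i, 0 < d i)
    (hdom : ∀ k, ∑ j ∈ Finset.univ.erase k, |A k j| * d j / d k ≤ A k k) :
    A.PosSemidef := by
  refine hA.posSemidef_iff_eigenvalues_nonneg.mpr fun i => show 0 ≤ hA.eigenvalues i from ?_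
  obtain ⟨k, hk⟩ :=
    exists_mem_closedBall_scaled_of_mem_spectrum hd (hA.eigenvalues_mem_spectrum_real i)
  rw [Metric.mem_closedBall, Real.dist_eq, abs_le] at hk
  linarith [hdom k, hk.1]

end Matrix

theorem stmt_5_general (n : ℕ) (Hlo Hhi H : Matrix (Fin n) (Fin n) ℝ)
    (hHS : H.IsSymm)
    (d : Fin n → ℝ) (hd : ∀ i, 0 < d i)
    (α : Fin n → ℝ)
    (hα : ∀ i, α i = max 0 (-(1/2) * (Hlo i i -
      ∑ j ∈ Finset.univ.erase i, max |Hlo i j| |Hhi i j| * d j / d i)))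
    (hH : ∀ i j, Hlo i j ≤ H i j ∧ H i j ≤ Hhi i j) :
    (H + 2 • Matrix.diagonal α).PosSemidef := by
  have hsymm : (H + 2 • diagonal α).IsHermitian := by
    rw [isHermitian_iff_isSymm]
    exact hHS.add ((isSymm_diagonal α).smul 2)
  refine hsymm.posSemidef_of_scaled_diag_dominant hd fun k => ?_
  have hoff : ∀ j ∈ Finset.univ.erase k, |(H + 2 • diagonal α) k j| * d j / d k
      ≤ max |Hlo k j| |Hhi k j| * d j / d k := by
    intro j hj
    rw [Matrix.add_apply, Matrix.smul_apply, diagonal_apply_ne _ (Finset.ne_of_mem_erase hj).symm,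
      smul_zero, add_zero]
    exact div_le_div_of_nonneg_right
      (mul_le_mul_of_nonneg_right (abs_le_max_abs_abs (hH k j).1 (hH k j).2) (hd j).le) (hd k).le
  have hαk := hα k ▸ le_max_right 0 _
  calc ∑ j ∈ Finset.univ.erase k, |(H + 2 • diagonal α) k j| * d j / d k
      ≤ ∑ j ∈ Finset.univ.erase k, max |Hlo k j| |Hhi k j| * d j / d k := Finset.sum_le_sum hoff
    _ ≤ H k k + 2 * α k := by linarith [(hH k k).1]
    _ = (H + 2 • diagonal α) k k := by simp [two_mul]

theorem stmt_5 (n : ℕ) (Hlo Hhi H : Matrix (Fin n) (Fin n) ℝ)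
    (hHloS : Hlo.IsSymm) (hHhiS : Hhi.IsSymm) (hHS : H.IsSymm)
    (hle : ∀ i j, Hlo i j ≤ Hhi i j)
    (d : Fin n → ℝ) (hd : ∀ i, 0 < d i)
    (α : Fin n → ℝ)
    (hα : ∀ i, α i = max 0 (-(1/2) * (Hlo i i -
      ∑ j ∈ Finset.univ.erase i, max |Hlo i j| |Hhi i j| * d j / d i)))
    (hH : ∀ i j, Hlo i j ≤ H i j ∧ H i j ≤ Hhi i j) :
    (H + 2 • Matrix.diagonal α).PosSemidef :=
  stmt_5_general n Hlo Hhi H hHS d hd α hα hH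
end

section
/- Let f : ℝⁿ → ℝ be twice continuously differentiable on a convex open set containing the box X, and α ∈ ℝⁿ nonnegative. If for every x ∈ X the matrix ∇²f(x) + 2·diag(α) is positive semidefinite, then g(x) = f(x) − Σ_i α_i (x̄_i − x_i)(x_i − x̲_i) is convex on X. -/
/-!
On a segment `t ↦ x + t • v`, a C² function `φ` has second derivative `D²φ(x + t • v)(v, v)`;
if this quadratic form is nonnegative on `X`, then `φ` is convex on every segment of `X`, hence on
`X`. The quadratic subtracted from `f` has Hessian `-2 diag α`, so the quadratic form of `D²g(x)`
is `vᵀ (∇²f(x) + 2 diag α) v`.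
-/

open Set

section SecondDerivative

variable {E F G : Type*} [NormedAddCommGroup E] [NormedSpace ℝ E]
  [NormedAddCommGroup F] [NormedSpace ℝ F] [NormedAddCommGroup G] [NormedSpace ℝ G]

theorem convexOn_of_convexOn_segment {X : Set E} {φ : E → ℝ} (hX : Convex ℝ X)
    (h : ∀ x ∈ X, ∀ y ∈ X, ConvexOn ℝ (Icc 0 1) fun t : ℝ => φ (x + t • (y - x))) :
    ConvexOn ℝ X φ := by
  refine ⟨hX, fun x hx y hy a b ha hb hab => ?_⟩
  have key := (h x hx y hy).2 (left_mem_Icc.2 zero_le_one) (right_mem_Icc.2 zero_le_one) ha hb hab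
  obtain rfl : a = 1 - b := by linarith
  have hseg : (1 - b) • x + b • y = x + b • (y - x) := by module
  simpa [hseg] using key

theorem ContDiffAt.differentiableAt_fderiv {φ : E → F} {x : E} (hφ : ContDiffAt ℝ 2 φ x) :
    DifferentiableAt ℝ (fderiv ℝ φ) x :=
  (hφ.fderiv_right (m := 1) (by norm_num)).differentiableAt one_ne_zero

theorem HasFDerivAt.hasDerivAt_comp_add_smul {φ : E → F} {φ' : E →L[ℝ] F} {x v : E} {t : ℝ}
    (hφ : HasFDerivAt φ φ' (x + t • v)) :
    HasDerivAt (fun s : ℝ => φ (x + s • v)) (φ' v) t := by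
  have hline : HasDerivAt (fun s : ℝ => x + s • v) v t := by
    simpa using ((hasDerivAt_id t).smul_const v).const_add x
  exact hφ.comp_hasDerivAt t hline

theorem ContDiffAt.hasDerivAt_fderiv_comp_add_smul {φ : E → F} {x v : E} {t : ℝ}
    (hφ : ContDiffAt ℝ 2 φ (x + t • v)) :
    HasDerivAt (fun s : ℝ => fderiv ℝ φ (x + s • v) v)
      (fderiv ℝ (fderiv ℝ φ) (x + t • v) v v) t :=
  (ContinuousLinearMap.apply ℝ F v).hasFDerivAt.comp _
    hφ.differentiableAt_fderiv.hasFDerivAt |>.hasDerivAt_comp_add_smul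

theorem convexOn_of_fderiv_fderiv_nonneg {φ : E → ℝ} {U X : Set E} (hU : IsOpen U)
    (hX : Convex ℝ X) (hXU : X ⊆ U) (hφ : ContDiffOn ℝ 2 φ U)
    (hφ'' : ∀ x ∈ X, ∀ v, 0 ≤ fderiv ℝ (fderiv ℝ φ) x v v) : ConvexOn ℝ X φ := by
  refine convexOn_of_convexOn_segment hX fun x hx y hy => ?_
  have hmem : ∀ t ∈ Icc (0 : ℝ) 1, x + t • (y - x) ∈ X := fun t ht =>
    hX.add_smul_sub_mem hx hy ht
  have hφat : ∀ t ∈ interior (Icc (0 : ℝ) 1), ContDiffAt ℝ 2 φ (x + t • (y - x)) :=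
    fun t ht => hφ.contDiffAt (hU.mem_nhds (hXU (hmem t (interior_subset ht))))
  refine convexOn_of_hasDerivWithinAt2_nonneg (convex_Icc 0 1) ?_
    (fun t ht => ((hφat t ht).differentiableAt two_ne_zero).hasFDerivAt
      |>.hasDerivAt_comp_add_smul.hasDerivWithinAt)
    (fun t ht => (hφat t ht).hasDerivAt_fderiv_comp_add_smul.hasDerivWithinAt)
    (fun t ht => hφ'' _ (hmem t (interior_subset ht)) _)
  exact (hφ.continuousOn.mono hXU).comp (by fun_prop) hmem

theorem fderiv_fderiv_sub {φ ψ : E → F} {x : E} (hφ : ContDiffAt ℝ 2 φ x)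
    (hψ : ContDiffAt ℝ 2 ψ x) :
    fderiv ℝ (fderiv ℝ (φ - ψ)) x = fderiv ℝ (fderiv ℝ φ) x - fderiv ℝ (fderiv ℝ ψ) x := by
  have hsub : fderiv ℝ (φ - ψ) =ᶠ[nhds x] fderiv ℝ φ - fderiv ℝ ψ := by
    filter_upwards [hφ.eventually (by simp), hψ.eventually (by simp)] with y hφy hψy
    exact fderiv_sub (hφy.differentiableAt two_ne_zero) (hψy.differentiableAt two_ne_zero)
  rw [hsub.fderiv_eq]
  exact fderiv_sub hφ.differentiableAt_fderiv hψ.differentiableAt_fderiv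

theorem fderiv_clm_apply_const_apply {c : E → F →L[ℝ] G} {x : E} (hc : DifferentiableAt ℝ c x)
    (u : F) (w : E) : fderiv ℝ (fun y => c y u) x w = fderiv ℝ c x w u := by
  simp [fderiv_clm_apply hc (differentiableAt_const u)]

end SecondDerivative

section BoxQuadratic

variable {ι : Type*} [Fintype ι]

def boxQuadratic (α a b : ι → ℝ) (x : ι → ℝ) : ℝ := ∑ i, α i * (b i - x i) * (x i - a i)

theorem hasFDerivAt_boxQuadratic (α a b x : ι → ℝ) :
    HasFDerivAt (boxQuadratic α a b)
      (∑ i, (α i * (b i + a i - 2 * x i)) • (ContinuousLinearMap.proj i : (ι → ℝ) →L[ℝ] ℝ)) x := by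
  refine HasFDerivAt.fun_sum fun i _ => ?_
  have h : HasDerivAt (fun s => α i * (b i - s) * (s - a i)) (α i * (b i + a i - 2 * x i)) (x i) :=
    ((((hasDerivAt_id' (x i)).const_sub (b i)).const_mul (α i)).mul
      ((hasDerivAt_id' (x i)).sub_const (a i))).congr_deriv (by ring)
  exact h.comp_hasFDerivAt x (hasFDerivAt_apply (𝕜 := ℝ) i x)

theorem fderiv_fderiv_boxQuadratic_apply (α a b x v : ι → ℝ) :
    fderiv ℝ (fderiv ℝ (boxQuadratic α a b)) x v v = -(2 * ∑ i, α i * v i ^ 2) := by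
  let proj (i : ι) : (ι → ℝ) →L[ℝ] ℝ := ContinuousLinearMap.proj i
  have hD : fderiv ℝ (boxQuadratic α a b) = fun y => ∑ i, (α i * (b i + a i - 2 * y i)) • proj i :=
    funext fun y => (hasFDerivAt_boxQuadratic α a b y).fderiv
  have hD2 := HasFDerivAt.fun_sum (u := Finset.univ) fun i _ =>
    ((((hasFDerivAt_apply (𝕜 := ℝ) i x).const_mul 2).const_sub (b i + a i)).const_mul
      (α i)).smul_const (proj i)
  rw [hD, hD2.fderiv]
  simp only [proj, smul_neg, sum_apply, ContinuousLinearMap.smulRight_apply,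
    neg_apply, smul_apply, ContinuousLinearMap.proj_apply,
    smul_eq_mul, Finset.mul_sum, ← Finset.sum_neg_distrib]
  exact Finset.sum_congr rfl fun i _ => by ring

end BoxQuadratic

open Matrix in
theorem dotProduct_mulVec_of_apply_single {ι : Type*} [Fintype ι] [DecidableEq ι]
    (B : (ι → ℝ) →L[ℝ] (ι → ℝ) →L[ℝ] ℝ) (v : ι → ℝ) :
    v ⬝ᵥ (of (fun i j => B (Pi.single i 1) (Pi.single j 1)) *ᵥ v) = B v v := by
  rw [← toLinearMap₂'_apply']
  exact LinearMap.congr_fun₂ (toLinearMap₂'_toMatrix' (R := ℝ) B.toLinearMap₁₂) v v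

open Matrix in
theorem dotProduct_mulVec_two_smul_diagonal {ι : Type*} [Fintype ι] [DecidableEq ι]
    (α v : ι → ℝ) : v ⬝ᵥ ((2 • diagonal α) *ᵥ v) = 2 * ∑ i, α i * v i ^ 2 := by
  rw [smul_mulVec, dotProduct_smul, nsmul_eq_mul, Nat.cast_ofNat]
  simp only [dotProduct, mulVec_diagonal]
  exact congrArg _ (Finset.sum_congr rfl fun i _ => by ring)

theorem stmt_7_general (n : ℕ) (f : (Fin n → ℝ) → ℝ)
    (U : Set (Fin n → ℝ)) (hUo : IsOpen U)
    (xlo xhi : Fin n → ℝ)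
    (X : Set (Fin n → ℝ))
    (hX : X = Set.univ.pi (fun i => Set.Icc (xlo i) (xhi i)))
    (hXU : X ⊆ U)
    (hf : ContDiffOn ℝ 2 f U)
    (α : Fin n → ℝ)
    (hess : ∀ x ∈ X,
      (Matrix.of (fun i j : Fin n =>
          fderiv ℝ (fun y => fderiv ℝ f y (Pi.single j 1)) x (Pi.single i 1))
        + 2 • Matrix.diagonal α).PosSemidef)
    (g : (Fin n → ℝ) → ℝ)
    (hg : ∀ x, g x = f x - ∑ i, α i * (xhi i - x i) * (x i - xlo i)) :
    ConvexOn ℝ X g := by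
  obtain rfl : g = f - boxQuadratic α xlo xhi := funext hg
  have hq : ContDiff ℝ 2 (boxQuadratic α xlo xhi) := by unfold boxQuadratic; fun_prop
  refine convexOn_of_fderiv_fderiv_nonneg hUo (hX ▸ convex_pi fun i _ => convex_Icc _ _) hXU
    (hf.sub hq.contDiffOn) fun x hx v => ?_
  have hfx : ContDiffAt ℝ 2 f x := hf.contDiffAt (hUo.mem_nhds (hXU hx))
  have hform := (hess x hx).dotProduct_mulVec_nonneg v
  simp only [fderiv_clm_apply_const_apply hfx.differentiableAt_fderiv, star_trivial,
    Matrix.add_mulVec, dotProduct_add, dotProduct_mulVec_of_apply_single,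
    dotProduct_mulVec_two_smul_diagonal] at hform
  rw [fderiv_fderiv_sub hfx hq.contDiffAt, sub_apply, sub_apply, fderiv_fderiv_boxQuadratic_apply]
  linarith

theorem stmt_7 (n : ℕ) (f : (Fin n → ℝ) → ℝ)
    (U : Set (Fin n → ℝ)) (hUo : IsOpen U) (hUc : Convex ℝ U)
    (xlo xhi : Fin n → ℝ)
    (X : Set (Fin n → ℝ))
    (hX : X = Set.univ.pi (fun i => Set.Icc (xlo i) (xhi i)))
    (hXU : X ⊆ U)
    (hf : ContDiffOn ℝ 2 f U)
    (α : Fin n → ℝ) (hα : ∀ i, 0 ≤ α i)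
    (hess : ∀ x ∈ X,
      (Matrix.of (fun i j : Fin n =>
          fderiv ℝ (fun y => fderiv ℝ f y (Pi.single j 1)) x (Pi.single i 1))
        + 2 • Matrix.diagonal α).PosSemidef)
    (g : (Fin n → ℝ) → ℝ)
    (hg : ∀ x, g x = f x - ∑ i, α i * (xhi i - x i) * (x i - xlo i)) :
    ConvexOn ℝ X g :=
  stmt_7_general n f U hUo xlo xhi X hX hXU hf α hess g hg
end
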